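/- arXiv:2501.13358 — 3 statements merged into one kernel-verified Lean document; each statement's English description precedes it below -/
import Mathlib

section
/- Let T be a positive integer and V a real number with 36/T ≤ V ≤ T/4. For every randomized bidding policy π over T rounds, there exists a sequence (v_t, m_t)_{t=1}^T ⊂ [0,1]^2 with Σ_{t=2}^T |m_t − m_{t−1}| ≤ V such that the expected dynamic regret of π on this sequence is at least √(T·V)/16. -/
/-!
The adversary plays the values `v ≡ 1` and a highest competing bid that is `0` except for
"spikes" of height `ε` at the rounds where an independent Bernoulli(`2ε`) coin comes up heads,
stopped after `K` spikes; each spike costs `2ε` of variation, so the variation is at most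
`2εK ≤ V`. The bid of round `t` is chosen before the coin of round `t` is seen, and against any
bid `b` the mixture `(1 - 2ε)·δ₀ + 2ε·δ_ε` costs at least `ε/2` in expectation: bids below `ε`
lose the spike, bids of at least `ε` overpay by at least `ε` on the other rounds. By Markov's
inequality fewer than `K` spikes have occurred before round `t` with probability at least
`1 - 2εt/K`, so the regret averaged over the coins is at least `(ε/2)·T·(1 - 2εT/K)`, and some
coin sequence does at least as well as the average. With `ε = √(TV)/(4T)` and `K = ⌊2√(TV)⌋`
this is at least `√(TV)/16`.
-/

/-- First-price auction reward: `r(b; v, m) = (v - b) · 1[b ≥ m]`. -/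
noncomputable def fpaReward (b v m : ℝ) : ℝ := if m ≤ b then v - b else 0

/-- A randomized bidding policy over `T` rounds: a probability space together with,
for each round `t`, a measurable map from (history of `(vₛ, mₛ)` for `s < t`, current
value `vₜ`, randomness `ω`) to a bid in `[0,1]`. Rounds are indexed `0, …, T-1`. -/
structure BidPolicy (T : ℕ) where
  Ω : Type
  [instMS : MeasurableSpace Ω]
  μ : MeasureTheory.Measure Ω
  isProb : MeasureTheory.IsProbabilityMeasure μ
  bid : (t : ℕ) → (Fin t → ℝ × ℝ) → ℝ → Ω → ℝ
  bid_mem : ∀ t h v ω, bid t h v ω ∈ Set.Icc (0:ℝ) 1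
  bid_measurable : ∀ t, Measurable fun p : (Fin t → ℝ × ℝ) × ℝ × Ω => bid t p.1 p.2.1 p.2.2

attribute [instance] BidPolicy.instMS

/-- The bid of the policy at round `t` on the sequence `(v, m)`, given randomness `ω`. -/
noncomputable def BidPolicy.bids {T : ℕ} (π : BidPolicy T) (v m : ℕ → ℝ) (t : ℕ)
    (ω : π.Ω) : ℝ :=
  π.bid t (fun s : Fin t => (v s, m s)) (v t) ω

/-- Expected dynamic regret of a policy on the sequence `(v, m)` over `T` rounds. -/
noncomputable def BidPolicy.expRegret {T : ℕ} (π : BidPolicy T) (v m : ℕ → ℝ) : ℝ :=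
  ∫ ω, (∑ t ∈ Finset.range T,
    (max (v t - m t) 0 - fpaReward (π.bids v m t ω) (v t) (m t))) ∂π.μ

/-- Temporal variation `Σ_{t=2}^T |m_t - m_{t-1}|` (rounds indexed `0, …, T-1`). -/
noncomputable def totalVariation (m : ℕ → ℝ) (T : ℕ) : ℝ :=
  ∑ t ∈ Finset.range (T - 1), |m (t + 1) - m t|

/-- Number of switches `Σ_{t=2}^T 1[m_t ≠ m_{t-1}]` (rounds indexed `0, …, T-1`). -/
noncomputable def numSwitches (m : ℕ → ℝ) (T : ℕ) : ℝ :=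
  ∑ t ∈ Finset.range (T - 1), if m (t + 1) ≠ m t then 1 else 0

open MeasureTheory Function Finset

/-- `coinAvg p n f` is the expectation of `f` when the coins `0, …, n-1` are independent
Bernoulli(`p`) and all later coins are `false`. -/
noncomputable def coinAvg (p : ℝ) : ℕ → ((ℕ → Bool) → ℝ) → ℝ
  | 0, f => f fun _ => false
  | n + 1, f => coinAvg p n fun σ => (1 - p) * f (update σ n false) + p * f (update σ n true)

section CoinAvg

variable {p : ℝ}

theorem coinAvg_succ (n : ℕ) (f : (ℕ → Bool) → ℝ) :
    coinAvg p (n + 1) f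
      = coinAvg p n fun σ => (1 - p) * f (update σ n false) + p * f (update σ n true) :=
  rfl

theorem coinAvg_const (n : ℕ) (c : ℝ) : coinAvg p n (fun _ => c) = c := by
  induction n with
  | zero => rfl
  | succ n ih => simpa only [coinAvg_succ, ← add_mul, sub_add_cancel, one_mul] using ih

theorem coinAvg_add (n : ℕ) (f g : (ℕ → Bool) → ℝ) :
    coinAvg p n (fun σ => f σ + g σ) = coinAvg p n f + coinAvg p n g := by
  induction n generalizing f g with
  | zero => rfl
  | succ n ih =>
    simp only [coinAvg_succ, ← ih]
    congr 1
    funext σ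
    ring

theorem coinAvg_const_mul (n : ℕ) (c : ℝ) (f : (ℕ → Bool) → ℝ) :
    coinAvg p n (fun σ => c * f σ) = c * coinAvg p n f := by
  induction n generalizing f with
  | zero => rfl
  | succ n ih =>
    simp only [coinAvg_succ, ← ih]
    congr 1
    funext σ
    ring

theorem coinAvg_sum {ι : Type*} (n : ℕ) (s : Finset ι) (F : ι → (ℕ → Bool) → ℝ) :
    coinAvg p n (fun σ => ∑ i ∈ s, F i σ) = ∑ i ∈ s, coinAvg p n (F i) := by
  classical
  induction s using Finset.induction_on with
  | empty => simpa using coinAvg_const (p := p) n 0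
  | insert i s hi ih => simp only [sum_insert hi, coinAvg_add, ih]

theorem coinAvg_mono (hp₀ : 0 ≤ p) (hp₁ : p ≤ 1) {n : ℕ} {f g : (ℕ → Bool) → ℝ}
    (h : ∀ σ, f σ ≤ g σ) : coinAvg p n f ≤ coinAvg p n g := by
  induction n generalizing f g with
  | zero => exact h _
  | succ n ih =>
    refine ih fun σ => add_le_add ?_ ?_
    · exact mul_le_mul_of_nonneg_left (h _) (sub_nonneg.2 hp₁)
    · exact mul_le_mul_of_nonneg_left (h _) hp₀

theorem coinAvg_eq_of_update_eq {n N : ℕ} (hnN : n ≤ N) {f : (ℕ → Bool) → ℝ}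
    (hf : ∀ i, n ≤ i → ∀ σ c, f (update σ i c) = f σ) : coinAvg p N f = coinAvg p n f := by
  induction N, hnN using Nat.le_induction with
  | base => rfl
  | succ N hnN ih =>
    simpa only [coinAvg_succ, hf N hnN, ← add_mul, sub_add_cancel, one_mul] using ih

theorem exists_coinAvg_le (hp₀ : 0 ≤ p) (hp₁ : p ≤ 1) (n : ℕ) (f : (ℕ → Bool) → ℝ) :
    ∃ σ, coinAvg p n f ≤ f σ := by
  induction n generalizing f with
  | zero => exact ⟨_, le_rfl⟩
  | succ n ih =>
    obtain ⟨σ, hσ⟩ := ih fun σ => (1 - p) * f (update σ n false) + p * f (update σ n true)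
    rcases le_total (f (update σ n false)) (f (update σ n true)) with h | h
    · refine ⟨update σ n true, hσ.trans ?_⟩
      nlinarith
    · refine ⟨update σ n false, hσ.trans ?_⟩
      nlinarith

theorem integrable_coinAvg {Ω : Type*} [MeasurableSpace Ω] {μ : Measure Ω}
    {F : (ℕ → Bool) → Ω → ℝ} (hF : ∀ σ, Integrable (F σ) μ) (n : ℕ) :
    Integrable (fun ω => coinAvg p n fun σ => F σ ω) μ := by
  induction n generalizing F with
  | zero => exact hF _
  | succ n ih => exact ih fun σ => ((hF _).const_mul _).add ((hF _).const_mul _)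

theorem integral_coinAvg {Ω : Type*} [MeasurableSpace Ω] {μ : Measure Ω}
    {F : (ℕ → Bool) → Ω → ℝ} (hF : ∀ σ, Integrable (F σ) μ) (n : ℕ) :
    ∫ ω, coinAvg p n (fun σ => F σ ω) ∂μ = coinAvg p n fun σ => ∫ ω, F σ ω ∂μ := by
  induction n generalizing F with
  | zero => rfl
  | succ n ih =>
    refine (ih fun σ => ((hF _).const_mul _).add ((hF _).const_mul _)).trans ?_
    simp only [coinAvg_succ]
    congr 1
    funext σ
    exact (integral_add ((hF _).const_mul _) ((hF _).const_mul _)).trans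
      (by rw [integral_const_mul, integral_const_mul])

end CoinAvg

def headCount (σ : ℕ → Bool) (n : ℕ) : ℕ := ((range n).filter fun i => σ i).card

theorem headCount_succ (σ : ℕ → Bool) (n : ℕ) :
    headCount σ (n + 1) = headCount σ n + (σ n).toNat := by
  cases h : σ n <;> simp [headCount, range_add_one, filter_insert, h]

theorem headCount_update_of_le {σ : ℕ → Bool} {n i : ℕ} (h : n ≤ i) (c : Bool) :
    headCount (update σ i c) n = headCount σ n := by
  unfold headCount
  congr 1
  refine filter_congr fun s hs => ?_
  rw [update_of_ne (by simp at hs; omega)]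

theorem coinAvg_headCount (p : ℝ) (n : ℕ) :
    coinAvg p n (fun σ => (headCount σ n : ℝ)) = p * n := by
  induction n with
  | zero => simp [coinAvg, headCount]
  | succ n ih =>
    calc coinAvg p (n + 1) (fun σ => (headCount σ (n + 1) : ℝ))
        = coinAvg p n (fun σ => (headCount σ n : ℝ) + p) := by
          rw [coinAvg_succ]
          congr 1
          funext σ
          simp only [headCount_succ, update_self, headCount_update_of_le le_rfl, Bool.toNat_false,
            Bool.toNat_true]
          push_cast
          ring
      _ = p * (n + 1 : ℕ) := by
          rw [coinAvg_add, ih, coinAvg_const]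
          push_cast
          ring

/-- Markov's inequality for the number of heads. -/
theorem one_sub_le_coinAvg_headCount_lt {p : ℝ} (hp₀ : 0 ≤ p) (hp₁ : p ≤ 1) {K : ℕ} (hK : 0 < K)
    (n : ℕ) : 1 - p * n / K ≤ coinAvg p n fun σ => if headCount σ n < K then 1 else 0 := by
  have hK' : (0 : ℝ) < K := Nat.cast_pos.2 hK
  have h : 1 ≤ coinAvg p n fun σ =>
      (if headCount σ n < K then 1 else 0) + (K : ℝ)⁻¹ * headCount σ n := by
    calc (1 : ℝ) = coinAvg p n fun _ => 1 := (coinAvg_const n 1).symm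
      _ ≤ _ := coinAvg_mono hp₀ hp₁ fun σ => by
          split_ifs with hlt
          · have : 0 ≤ (K : ℝ)⁻¹ * headCount σ n := by positivity
            linarith
          · rw [zero_add, inv_mul_eq_div, le_div_iff₀ hK', one_mul]
            exact_mod_cast not_lt.1 hlt
  rw [coinAvg_add, coinAvg_const_mul, coinAvg_headCount] at h
  rw [div_eq_inv_mul]
  linarith

noncomputable def fpaRegret (b v m : ℝ) : ℝ := max (v - m) 0 - fpaReward b v m

theorem fpaRegret_nonneg (b v m : ℝ) : 0 ≤ fpaRegret b v m := by
  unfold fpaRegret fpaReward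
  split_ifs
  · linarith [le_max_left (v - m) 0]
  · linarith [le_max_right (v - m) 0]

theorem fpaRegret_le (b v m : ℝ) : fpaRegret b v m ≤ |v - m| + |v - b| := by
  have hmax : max (v - m) 0 ≤ |v - m| := max_le (le_abs_self _) (abs_nonneg _)
  unfold fpaRegret fpaReward
  split_ifs
  · linarith [neg_abs_le (v - b)]
  · linarith [abs_nonneg (v - b)]

theorem measurable_fpaRegret (v m : ℝ) : Measurable fun b => fpaRegret b v m :=
  measurable_const.sub <| Measurable.ite (measurableSet_le measurable_const measurable_id)
    (measurable_const.sub measurable_id) measurable_const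

theorem half_le_fpaRegret_spike {ε b : ℝ} (hε₀ : 0 ≤ ε) (hε : ε ≤ 1 / 4) (hb : 0 ≤ b) :
    ε / 2 ≤ (1 - 2 * ε) * fpaRegret b 1 0 + 2 * ε * fpaRegret b 1 ε := by
  have h₀ : fpaRegret b 1 0 = b := by simp [fpaRegret, fpaReward, hb]
  have h₁ : max (1 - ε) 0 = 1 - ε := max_eq_left (by linarith)
  rw [h₀]
  unfold fpaRegret fpaReward
  rw [h₁]
  split_ifs <;> nlinarith

theorem totalVariation_le_two_mul_sum {m : ℕ → ℝ} (hm : ∀ t, 0 ≤ m t) (T : ℕ) :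
    totalVariation m T ≤ 2 * ∑ t ∈ range T, m t := by
  cases T with
  | zero => simp [totalVariation]
  | succ n =>
    have hsucc := sum_range_succ m n
    have hshift := sum_range_succ' m n
    calc totalVariation m (n + 1) ≤ ∑ t ∈ range n, (m (t + 1) + m t) := by
          refine sum_le_sum fun t _ => abs_sub_le_iff.2 ⟨?_, ?_⟩ <;> linarith [hm t, hm (t + 1)]
      _ ≤ 2 * ∑ t ∈ range (n + 1), m t := by
          rw [sum_add_distrib]
          linarith [hm 0, hm n]

noncomputable def spikeSeq (ε : ℝ) (K : ℕ) (σ : ℕ → Bool) (t : ℕ) : ℝ :=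
  if σ t ∧ headCount σ t < K then ε else 0

section SpikeSeq

variable {ε : ℝ} {K : ℕ} {σ : ℕ → Bool}

theorem spikeSeq_mem_Icc (hε : 0 ≤ ε) (t : ℕ) : spikeSeq ε K σ t ∈ Set.Icc 0 ε := by
  unfold spikeSeq
  split_ifs
  · exact ⟨hε, le_rfl⟩
  · exact ⟨le_rfl, hε⟩

theorem spikeSeq_update_of_lt {t i : ℕ} (h : t < i) (c : Bool) :
    spikeSeq ε K (update σ i c) t = spikeSeq ε K σ t := by
  simp only [spikeSeq, update_of_ne h.ne, headCount_update_of_le h.le]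

theorem spikeSeq_update_self (t : ℕ) (c : Bool) :
    spikeSeq ε K (update σ t c) t = if c ∧ headCount σ t < K then ε else 0 := by
  simp only [spikeSeq, update_self, headCount_update_of_le le_rfl]

theorem sum_spikeSeq (n : ℕ) : ∑ t ∈ range n, spikeSeq ε K σ t = ε * min (headCount σ n) K := by
  induction n with
  | zero => simp [headCount]
  | succ n ih =>
    rw [sum_range_succ, ih, headCount_succ, spikeSeq]
    cases σ n
    · simp
    · by_cases h : headCount σ n < K
      · simp only [min_eq_left h.le, h, and_self, ↓reduceIte, Bool.toNat_true,
          Order.add_one_le_iff, inf_of_le_left, Nat.cast_add, Nat.cast_one]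
        ring
      · simp [h, min_eq_right (not_lt.1 h), min_eq_right (by omega : K ≤ headCount σ n + 1)]

theorem totalVariation_spikeSeq_le (hε : 0 ≤ ε) (T : ℕ) :
    totalVariation (spikeSeq ε K σ) T ≤ 2 * ε * K := by
  have hmin : ((min (headCount σ T) K : ℕ) : ℝ) ≤ K := Nat.cast_le.2 (min_le_right _ _)
  calc totalVariation (spikeSeq ε K σ) T ≤ 2 * ∑ t ∈ range T, spikeSeq ε K σ t :=
        totalVariation_le_two_mul_sum (fun t => (spikeSeq_mem_Icc hε t).1) T
    _ ≤ 2 * ε * K := by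
        rw [sum_spikeSeq, ← mul_assoc]
        exact mul_le_mul_of_nonneg_left hmin (by positivity)

end SpikeSeq

namespace BidPolicy

variable {T : ℕ} (π : BidPolicy T)

theorem measurable_bids (v m : ℕ → ℝ) (t : ℕ) : Measurable (π.bids v m t) :=
  (π.bid_measurable t).comp (measurable_const.prodMk (measurable_const.prodMk measurable_id))

theorem bids_congr {v m m' : ℕ → ℝ} {t : ℕ} (h : ∀ s < t, m' s = m s) (ω : π.Ω) :
    π.bids v m' t ω = π.bids v m t ω := by
  unfold bids
  congr 2
  funext s
  rw [h s s.isLt]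

theorem integrable_fpaRegret_bids (v m : ℕ → ℝ) (t : ℕ) :
    Integrable (fun ω => fpaRegret (π.bids v m t ω) (v t) (m t)) π.μ := by
  have := π.isProb
  refine .of_bound ((measurable_fpaRegret _ _).comp (π.measurable_bids v m t)).aestronglyMeasurable
    (|v t - m t| + (|v t| + 1)) (ae_of_all _ fun ω => ?_)
  obtain ⟨hb₀, hb₁⟩ : π.bids v m t ω ∈ Set.Icc 0 1 := π.bid_mem ..
  have hvb : |v t - π.bids v m t ω| ≤ |v t| + 1 :=
    (abs_sub _ _).trans (by rw [abs_of_nonneg hb₀]; linarith)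
  rw [Real.norm_eq_abs, abs_of_nonneg (fpaRegret_nonneg ..)]
  linarith [fpaRegret_le (π.bids v m t ω) (v t) (m t)]


section Spike

variable {ε : ℝ} {K : ℕ}

noncomputable def spikeRegret (ε : ℝ) (K t : ℕ) (σ : ℕ → Bool) (ω : π.Ω) : ℝ :=
  fpaRegret (π.bids (fun _ => 1) (spikeSeq ε K σ) t ω) 1 (spikeSeq ε K σ t)

theorem bids_spikeSeq_update {t i : ℕ} (h : t ≤ i) (σ : ℕ → Bool) (c : Bool) (ω : π.Ω) :
    π.bids (fun _ => 1) (spikeSeq ε K (update σ i c)) t ω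
      = π.bids (fun _ => 1) (spikeSeq ε K σ) t ω :=
  π.bids_congr (fun _ hs => spikeSeq_update_of_lt (hs.trans_le h) c) ω

theorem spikeRegret_update_of_lt {t i : ℕ} (h : t < i) (σ : ℕ → Bool) (c : Bool) (ω : π.Ω) :
    π.spikeRegret ε K t (update σ i c) ω = π.spikeRegret ε K t σ ω := by
  rw [spikeRegret, spikeSeq_update_of_lt h, π.bids_spikeSeq_update h.le, spikeRegret]

/-- The bid of round `t` does not see the coin of round `t`. -/
theorem half_le_avg_spikeRegret_update (hε₀ : 0 ≤ ε) (hε : ε ≤ 1 / 4) (t : ℕ) (σ : ℕ → Bool)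
    (ω : π.Ω) :
    ε / 2 * (if headCount σ t < K then 1 else 0)
      ≤ (1 - 2 * ε) * π.spikeRegret ε K t (update σ t false) ω
        + 2 * ε * π.spikeRegret ε K t (update σ t true) ω := by
  simp only [spikeRegret, spikeSeq_update_self, π.bids_spikeSeq_update le_rfl]
  obtain ⟨hb₀, -⟩ : π.bids (fun _ => 1) (spikeSeq ε K σ) t ω ∈ Set.Icc 0 1 := π.bid_mem ..
  by_cases hK : headCount σ t < K
  · simpa [hK] using half_le_fpaRegret_spike hε₀ hε hb₀
  · simp only [hK, and_false, if_false, mul_zero, ← add_mul, sub_add_cancel, one_mul]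
    exact fpaRegret_nonneg ..

theorem le_coinAvg_spikeRegret (hε₀ : 0 ≤ ε) (hε : ε ≤ 1 / 4) (hK : 0 < K) {t n : ℕ}
    (htn : t < n) (ω : π.Ω) :
    ε / 2 * (1 - 2 * ε * t / K) ≤ coinAvg (2 * ε) n fun σ => π.spikeRegret ε K t σ ω := by
  have hp₀ : 0 ≤ 2 * ε := by positivity
  have hp₁ : 2 * ε ≤ 1 := by linarith
  calc ε / 2 * (1 - 2 * ε * t / K)
      ≤ ε / 2 * coinAvg (2 * ε) t fun σ => if headCount σ t < K then 1 else 0 :=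
        mul_le_mul_of_nonneg_left (one_sub_le_coinAvg_headCount_lt hp₀ hp₁ hK t) (by positivity)
    _ = coinAvg (2 * ε) t fun σ => ε / 2 * if headCount σ t < K then 1 else 0 :=
        (coinAvg_const_mul ..).symm
    _ ≤ coinAvg (2 * ε) (t + 1) fun σ => π.spikeRegret ε K t σ ω :=
        coinAvg_mono hp₀ hp₁ (π.half_le_avg_spikeRegret_update hε₀ hε t · ω)
    _ = coinAvg (2 * ε) n fun σ => π.spikeRegret ε K t σ ω :=
        (coinAvg_eq_of_update_eq htn fun i hi σ c => π.spikeRegret_update_of_lt hi σ c ω).symm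

theorem le_coinAvg_expRegret_spikeSeq (hε₀ : 0 ≤ ε) (hε : ε ≤ 1 / 4) (hK : 0 < K) :
    ε / 2 * T * (1 - 2 * ε * T / K)
      ≤ coinAvg (2 * ε) T fun σ => π.expRegret (fun _ => 1) (spikeSeq ε K σ) := by
  have := π.isProb
  have hint (σ : ℕ → Bool) :
      Integrable (fun ω => ∑ t ∈ range T, π.spikeRegret ε K t σ ω) π.μ :=
    integrable_finsetSum _ fun t _ => π.integrable_fpaRegret_bids _ _ t
  have hround (ω : π.Ω) :
      ε / 2 * T * (1 - 2 * ε * T / K)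
        ≤ coinAvg (2 * ε) T fun σ => ∑ t ∈ range T, π.spikeRegret ε K t σ ω := by
    rw [coinAvg_sum]
    calc ε / 2 * T * (1 - 2 * ε * T / K) = ∑ _t ∈ range T, ε / 2 * (1 - 2 * ε * T / K) := by
          simp only [sum_const, card_range, nsmul_eq_mul]
          ring
      _ ≤ _ := sum_le_sum fun t ht => by
          have htT := mem_range.1 ht
          refine le_trans ?_ (π.le_coinAvg_spikeRegret hε₀ hε hK htT ω)
          gcongr
  calc ε / 2 * T * (1 - 2 * ε * T / K) = ∫ _, ε / 2 * T * (1 - 2 * ε * T / K) ∂π.μ := by simp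
    _ ≤ ∫ ω, coinAvg (2 * ε) T (fun σ => ∑ t ∈ range T, π.spikeRegret ε K t σ ω) ∂π.μ :=
        integral_mono (integrable_const _) (integrable_coinAvg hint T) hround
    _ = _ := integral_coinAvg hint T

theorem exists_totalVariation_le_and_le_expRegret (hε₀ : 0 ≤ ε) (hε : ε ≤ 1 / 4) (hK : 0 < K) :
    ∃ v m : ℕ → ℝ, (∀ t, v t ∈ Set.Icc (0:ℝ) 1) ∧ (∀ t, m t ∈ Set.Icc (0:ℝ) 1) ∧
      totalVariation m T ≤ 2 * ε * K ∧ ε / 2 * T * (1 - 2 * ε * T / K) ≤ π.expRegret v m := by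
  obtain ⟨σ, hσ⟩ := exists_coinAvg_le (p := 2 * ε) (by positivity) (by linarith) T
    fun σ => π.expRegret (fun _ => 1) (spikeSeq ε K σ)
  refine ⟨fun _ => 1, spikeSeq ε K σ, fun _ => ⟨zero_le_one, le_rfl⟩, fun t => ?_,
    totalVariation_spikeSeq_le hε₀ T, (π.le_coinAvg_expRegret_spikeSeq hε₀ hε hK).trans hσ⟩
  obtain ⟨h₀, h₁⟩ := spikeSeq_mem_Icc (K := K) (σ := σ) hε₀ t
  exact ⟨h₀, by linarith⟩

end Spike

end BidPolicy

/-- Minimax lower bound under the temporal variation constraint: for `36/T ≤ V ≤ T/4`,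
every randomized bidding policy suffers expected dynamic regret at least `√(T·V)/16`
on some sequence in `[0,1]²` whose temporal variation is at most `V`. -/
theorem variation_budget_minimax_lower_bound
    (T : ℕ) (hT : 0 < T) (V : ℝ) (hV₁ : 36 / (T : ℝ) ≤ V) (hV₂ : V ≤ (T : ℝ) / 4)
    (π : BidPolicy T) :
    ∃ v m : ℕ → ℝ, (∀ t, v t ∈ Set.Icc (0:ℝ) 1) ∧ (∀ t, m t ∈ Set.Icc (0:ℝ) 1) ∧
      totalVariation m T ≤ V ∧
      Real.sqrt ((T : ℝ) * V) / 16 ≤ π.expRegret v m := by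
  have hT' : (0 : ℝ) < T := Nat.cast_pos.2 hT
  set Q := √(T * V)
  have hTV : 36 ≤ T * V := by rwa [div_le_iff₀ hT', mul_comm] at hV₁
  have hQ : Q ^ 2 = T * V := Real.sq_sqrt (by linarith)
  have hQ₆ : 6 ≤ Q := (Real.le_sqrt (by norm_num) (by linarith)).2 (by linarith)
  have hQT : Q ≤ T / 2 := by nlinarith
  set ε := Q / (4 * T) with hε_def
  have hK : 2 * Q - 1 < ⌊2 * Q⌋₊ := Nat.sub_one_lt_floor _
  have hKQ : (⌊2 * Q⌋₊ : ℝ) ≤ 2 * Q := Nat.floor_le (by positivity)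
  have hK₀ : 0 < ⌊2 * Q⌋₊ := by exact_mod_cast (by linarith : (0 : ℝ) < ⌊2 * Q⌋₊)
  have hε : ε ≤ 1 / 4 := by rw [hε_def, div_le_iff₀ (by positivity)]; linarith
  obtain ⟨v, m, hv, hm, hvar, hreg⟩ :=
    π.exists_totalVariation_le_and_le_expRegret (by positivity) hε hK₀
  refine ⟨v, m, hv, hm, hvar.trans ?_, le_trans ?_ hreg⟩
  · calc 2 * ε * ⌊2 * Q⌋₊ ≤ 2 * ε * (2 * Q) := by gcongr
      _ = Q ^ 2 / T := by rw [hε_def]; field_simp; ring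
      _ = V := by rw [hQ]; field_simp
  · have hQK : Q / (2 * ⌊2 * Q⌋₊) ≤ 1 / 2 := by rw [div_le_iff₀ (by positivity)]; linarith
    calc Q / 16 ≤ Q / 8 * (1 - Q / (2 * ⌊2 * Q⌋₊)) := by nlinarith
      _ = _ := by rw [hε_def]; field_simp; ring
end

section
/- There exist constants C > 0 and k ∈ ℕ such that for every integer T ≥ 2 there exists a single randomized bidding policy π over T rounds (constructed without knowledge of the variation) such that for every sequence (v_t, m_t)_{t=1}^T ⊂ [0,1]^2, the expected dynamic regret of π on this sequence is at most C · max{√(T·V_T), 1} · (1 + log T)^k, where V_T = Σ_{t=2}^T |m_t − m_{t−1}|. -/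
/-!
The policy is deterministic: in round `t ≥ 1` it bids `min(vₜ, m_{t-1} + δₜ)` with the margin
`δₜ = √((1/T + V_{<t}) / T)`, where `V_{<t}` is the variation of the competing bids seen so far.
Such a bid loses at most `δₜ + |mₜ - m_{t-1}|`, plus one when the jump `|mₜ - m_{t-1}|` exceeds
`δₜ`. The margins sum to at most `√(1 + T V_T)` and the jumps to `V_T ≤ √(T V_T)`. A jump
exceeding `δₜ ≥ 1/T` raises `√(1/T + V_{<t})` by at least `1 / (2√(2T))`, so there are at most
`2√(2(1 + T V_T))` of them. No logarithmic factor is needed.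
-/

open Finset MeasureTheory

noncomputable def margin (T S : ℝ) : ℝ := √((T⁻¹ + S) / T)

lemma margin_mono {T : ℝ} (hT : 0 < T) {S S' : ℝ} (h : S ≤ S') : margin T S ≤ margin T S' :=
  Real.sqrt_le_sqrt (div_le_div_of_nonneg_right (by linarith) hT.le)

lemma max_sub_fpaReward_le_one {b v m : ℝ} (hb : b ≤ 1) (hv : v ∈ Set.Icc (0 : ℝ) 1)
    (hm : 0 ≤ m) : max (v - m) 0 - fpaReward b v m ≤ 1 := by
  obtain ⟨hv0, hv1⟩ := hv
  unfold fpaReward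
  split_ifs <;> rcases max_cases (v - m) 0 with ⟨h, _⟩ | ⟨h, _⟩ <;> rw [h] <;> linarith

lemma max_sub_fpaReward_min_le {v m p δ : ℝ} (hv : v ≤ 1) (hm : 0 ≤ m) (hδ : 0 ≤ δ) :
    max (v - m) 0 - fpaReward (min v (p + δ)) v m ≤
      δ + |m - p| + if δ < |m - p| then 1 else 0 := by
  have hind : (0 : ℝ) ≤ if δ < |m - p| then 1 else 0 := by split_ifs <;> norm_num
  have hpm : p - m ≤ |m - p| := by rw [abs_sub_comm]; exact le_abs_self _
  by_cases hwin : m ≤ min v (p + δ)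
  · rw [fpaReward, if_pos hwin, max_eq_left (by linarith [min_le_left v (p + δ)])]
    linarith [min_le_right v (p + δ)]
  rw [fpaReward, if_neg hwin, sub_zero]
  rcases le_or_gt v m with hvm | hmv
  · rw [max_eq_right (sub_nonpos.2 hvm)]
    linarith [abs_nonneg (m - p)]
  have hover : δ < |m - p| := by
    have := (min_lt_iff.1 (not_le.1 hwin)).resolve_left hmv.not_gt
    linarith [le_abs_self (m - p)]
  rw [if_pos hover, max_eq_left (by linarith)]
  linarith [abs_nonneg (m - p)]

section margin

variable {T : ℝ} {a : ℕ → ℝ}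

lemma sum_margin_le (hT : 0 < T) (ha : ∀ i, 0 ≤ a i) {n : ℕ} (hn : (n : ℝ) ≤ T) :
    ∑ j ∈ range n, margin T (∑ i ∈ range j, a i) ≤ √(1 + T * ∑ i ∈ range n, a i) := by
  calc ∑ j ∈ range n, margin T (∑ i ∈ range j, a i)
      ≤ ∑ _j ∈ range n, margin T (∑ i ∈ range n, a i) := by
        refine sum_le_sum fun j hj => margin_mono hT ?_
        exact sum_le_sum_of_subset_of_nonneg (range_subset_range.2 (mem_range.1 hj).le)
          fun i _ _ => ha i
    _ = n * margin T (∑ i ∈ range n, a i) := by rw [sum_const, card_range, nsmul_eq_mul]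
    _ ≤ T * margin T (∑ i ∈ range n, a i) := by gcongr; exact Real.sqrt_nonneg _
    _ = √(T ^ 2 * ((T⁻¹ + ∑ i ∈ range n, a i) / T)) := by
        rw [Real.sqrt_mul (sq_nonneg T), Real.sqrt_sq hT.le, margin]
    _ = √(1 + T * ∑ i ∈ range n, a i) := by
        congr 1
        field_simp

lemma one_le_sqrt_increment_of_margin_lt (hT : 0 < T) {S d : ℝ} (hS : 0 ≤ S)
    (h : margin T S < d) : 1 ≤ 2 * √(2 * T) * (√(T⁻¹ + S + d) - √(T⁻¹ + S)) := by
  set x := T⁻¹ + S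
  have hx : T⁻¹ ≤ x := le_add_of_nonneg_right hS
  have hTinv : T⁻¹ ≤ margin T S := by
    refine Real.le_sqrt_of_sq_le ?_
    rw [div_eq_mul_inv, sq]
    exact mul_le_mul_of_nonneg_right hx (inv_nonneg.2 hT.le)
  have hd : 0 < d := (inv_pos.2 hT).trans_le hTinv |>.trans h
  have hdT : 1 < d * T := (inv_lt_iff_one_lt_mul₀ hT).1 (hTinv.trans_lt h)
  have hxd : x < T * d ^ 2 := by
    have := (Real.sqrt_lt' hd).1 h
    rwa [div_lt_iff₀ hT, mul_comm] at this
  have hy1 : √(x + d) < √(2 * T) * d := by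
    rw [Real.sqrt_lt' (by positivity), mul_pow, Real.sq_sqrt (by positivity)]
    nlinarith
  have hy01 : √x ≤ √(x + d) := Real.sqrt_le_sqrt (by linarith)
  have hdiff : (√(x + d) - √x) * (√(x + d) + √x) = d := by
    have h0 := Real.sq_sqrt (show 0 ≤ x by linarith [inv_pos.2 hT])
    have h1 := Real.sq_sqrt (show 0 ≤ x + d by linarith [inv_pos.2 hT])
    linear_combination h1 - h0
  refine (le_mul_iff_one_le_right hd).1 ?_
  calc d = (√(x + d) - √x) * (√(x + d) + √x) := hdiff.symm
    _ ≤ (√(x + d) - √x) * (2 * (√(2 * T) * d)) :=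
        mul_le_mul_of_nonneg_left (by linarith) (sub_nonneg.2 hy01)
    _ = d * (2 * √(2 * T) * (√(x + d) - √x)) := by ring

lemma sum_indicator_margin_lt_le (hT : 0 < T) (ha : ∀ i, 0 ≤ a i) (n : ℕ) :
    ∑ j ∈ range n, (if margin T (∑ i ∈ range j, a i) < a j then (1 : ℝ) else 0) ≤
      2 * √(2 * (1 + T * ∑ i ∈ range n, a i)) := by
  set f : ℕ → ℝ := fun j => √(T⁻¹ + ∑ i ∈ range j, a i)
  have hS : ∀ j, 0 ≤ ∑ i ∈ range j, a i := fun j => sum_nonneg fun i _ => ha i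
  have hstep : ∀ j, f (j + 1) = √(T⁻¹ + ∑ i ∈ range j, a i + a j) := fun j => by
    simp only [f, sum_range_succ, add_assoc]
  have hterm : ∀ j ∈ range n, (if margin T (∑ i ∈ range j, a i) < a j then (1 : ℝ) else 0) ≤
      2 * √(2 * T) * (f (j + 1) - f j) := fun j _ => by
    split_ifs with hover
    · rw [hstep]
      exact one_le_sqrt_increment_of_margin_lt hT (hS j) hover
    · have : f j ≤ f (j + 1) := by
        rw [hstep]
        exact Real.sqrt_le_sqrt (le_add_of_nonneg_right (ha j))
      have : 0 ≤ f (j + 1) - f j := by linarith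
      positivity
  calc _ ≤ ∑ j ∈ range n, 2 * √(2 * T) * (f (j + 1) - f j) := sum_le_sum hterm
    _ = 2 * √(2 * T) * (f n - f 0) := by rw [← mul_sum, sum_range_sub]
    _ ≤ 2 * √(2 * T) * f n := by
        have : 0 ≤ f 0 := Real.sqrt_nonneg _
        gcongr
        linarith
    _ = 2 * √(2 * (1 + T * ∑ i ∈ range n, a i)) := by
        rw [mul_assoc, ← Real.sqrt_mul (by positivity)]
        congr 2
        field_simp

end margin

lemma totalVariation_nonneg (m : ℕ → ℝ) (T : ℕ) : 0 ≤ totalVariation m T :=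
  sum_nonneg fun _ _ => abs_nonneg _

lemma totalVariation_le_of_mem_Icc {m : ℕ → ℝ} {T : ℕ}
    (hm : ∀ t < T, m t ∈ Set.Icc (0 : ℝ) 1) : totalVariation m T ≤ (T - 1 : ℕ) := by
  calc totalVariation m T ≤ ∑ _t ∈ range (T - 1), (1 : ℝ) := by
        refine sum_le_sum fun t ht => ?_
        have hT := mem_range.1 ht
        obtain ⟨h0, h1⟩ := hm t (by omega)
        obtain ⟨h0', h1'⟩ := hm (t + 1) (by omega)
        exact abs_sub_le_of_nonneg_of_le h0' h1' h0 h1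
    _ = (T - 1 : ℕ) := by simp

/-- The clamp to `[0,1]` only matters on histories outside `[0,1]²`. -/
noncomputable def variationBid (T : ℕ) : (t : ℕ) → (Fin t → ℝ × ℝ) → ℝ → ℝ
  | 0, _, _ => 0
  | j + 1, h, v => max 0 (min 1 (min v ((h (Fin.last j)).2 +
      margin T (∑ i : Fin j, |(h i.succ).2 - (h i.castSucc).2|))))

lemma variationBid_mem (T t : ℕ) (h : Fin t → ℝ × ℝ) (v : ℝ) :
    variationBid T t h v ∈ Set.Icc (0 : ℝ) 1 := by
  cases t with
  | zero => exact ⟨le_rfl, zero_le_one⟩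
  | succ j => exact ⟨le_max_left _ _, max_le zero_le_one (min_le_left _ _)⟩

lemma measurable_variationBid (T t : ℕ) :
    Measurable fun p : (Fin t → ℝ × ℝ) × ℝ => variationBid T t p.1 p.2 := by
  cases t with
  | zero => exact measurable_const
  | succ j => simp only [variationBid, margin]; fun_prop

lemma variationBid_succ (T j : ℕ) (v m : ℕ → ℝ) :
    variationBid T (j + 1) (fun s => (v s, m s)) (v (j + 1)) =
      max 0 (min 1 (min (v (j + 1)) (m j + margin T (totalVariation m (j + 1))))) := by
  simp only [variationBid, totalVariation, Nat.add_sub_cancel]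
  rw [← Fin.sum_univ_eq_sum_range (fun i => |m (i + 1) - m i|)]
  rfl

noncomputable def variationPolicy (T : ℕ) : BidPolicy T where
  Ω := Unit
  μ := Measure.dirac ()
  isProb := inferInstance
  bid t h v _ := variationBid T t h v
  bid_mem t h v _ := variationBid_mem T t h v
  bid_measurable t := (measurable_variationBid T t).comp
    (measurable_fst.prodMk (measurable_fst.comp measurable_snd))

lemma expRegret_variationPolicy (T : ℕ) (v m : ℕ → ℝ) :
    (variationPolicy T).expRegret v m = ∑ t ∈ range T,
      (max (v t - m t) 0 - fpaReward (variationBid T t (fun s => (v s, m s)) (v t)) (v t) (m t)) :=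
  integral_dirac _ ()

theorem expRegret_variationPolicy_le {T : ℕ} (hT : 1 ≤ T) {v m : ℕ → ℝ}
    (hv : ∀ t < T, v t ∈ Set.Icc (0 : ℝ) 1) (hm : ∀ t < T, m t ∈ Set.Icc (0 : ℝ) 1) :
    (variationPolicy T).expRegret v m ≤
      1 + (√(1 + T * totalVariation m T) + totalVariation m T +
        2 * √(2 * (1 + T * totalVariation m T))) := by
  obtain ⟨n, rfl⟩ : ∃ n, T = n + 1 := ⟨T - 1, by omega⟩
  set a : ℕ → ℝ := fun i => |m (i + 1) - m i|
  have ha : ∀ i, 0 ≤ a i := fun i => abs_nonneg _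
  have hV : totalVariation m (n + 1) = ∑ i ∈ range n, a i := rfl
  have hTpos : (0 : ℝ) < (n + 1 : ℕ) := by positivity
  have hround : ∀ j ∈ range n,
      max (v (j + 1) - m (j + 1)) 0 - fpaReward
        (variationBid (n + 1) (j + 1) (fun s => (v s, m s)) (v (j + 1))) (v (j + 1)) (m (j + 1)) ≤
      margin (n + 1 : ℕ) (∑ i ∈ range j, a i) + a j +
        if margin (n + 1 : ℕ) (∑ i ∈ range j, a i) < a j then 1 else 0 := by
    intro j hj
    have hj := mem_range.1 hj
    obtain ⟨hv0, hv1⟩ := hv (j + 1) (by omega)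
    have hδ : 0 ≤ margin (n + 1 : ℕ) (totalVariation m (j + 1)) := Real.sqrt_nonneg _
    have hbid : min (v (j + 1)) (m j + margin (n + 1 : ℕ) (totalVariation m (j + 1))) ∈
        Set.Icc (0 : ℝ) 1 :=
      ⟨le_min hv0 (add_nonneg (hm j (by omega)).1 hδ), (min_le_left _ _).trans hv1⟩
    rw [variationBid_succ, min_eq_right hbid.2, max_eq_right hbid.1]
    exact max_sub_fpaReward_min_le hv1 (hm (j + 1) (by omega)).1 hδ
  rw [expRegret_variationPolicy, sum_range_succ', add_comm, hV]
  refine add_le_add (max_sub_fpaReward_le_one zero_le_one (hv 0 (by omega)) (hm 0 (by omega)).1) ?_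
  calc _ ≤ _ := sum_le_sum hround
    _ = _ := by rw [sum_add_distrib, sum_add_distrib]
    _ ≤ _ := add_le_add_three (sum_margin_le hTpos ha (by push_cast; linarith)) le_rfl
        (sum_indicator_margin_lt_le hTpos ha n)

/-- Parameter-free upper bound under the temporal variation measure: there is a single
policy (not knowing `V_T`) whose expected dynamic regret on every sequence in `[0,1]²`
is `O(max {√(T·V_T), 1})` up to polylogarithmic factors in `T`. -/
theorem adaptive_variation_upper_bound :
    ∃ C : ℝ, 0 < C ∧ ∃ k : ℕ, ∀ T : ℕ, 2 ≤ T → ∃ π : BidPolicy T,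
      ∀ v m : ℕ → ℝ,
        (∀ t < T, v t ∈ Set.Icc (0:ℝ) 1) → (∀ t < T, m t ∈ Set.Icc (0:ℝ) 1) →
        π.expRegret v m ≤
          C * max (Real.sqrt ((T : ℝ) * totalVariation m T)) 1 *
            (1 + Real.log T) ^ k := by
  refine ⟨8, by norm_num, 0, fun T hT => ⟨variationPolicy T, fun v m hv hm => ?_⟩⟩
  set V := totalVariation m T
  set M := max √(T * V) 1
  have hV0 : 0 ≤ V := totalVariation_nonneg m T
  have hVT : V ≤ T := (totalVariation_le_of_mem_Icc hm).trans (Nat.cast_le.2 (Nat.sub_le T 1))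
  have hM1 : 1 ≤ M := le_max_right _ _
  have hTV : T * V ≤ M ^ 2 := by
    rw [← Real.sq_sqrt (by positivity : (0 : ℝ) ≤ T * V)]
    exact pow_le_pow_left₀ (Real.sqrt_nonneg _) (le_max_left _ _) 2
  have hVM : V ≤ M := by
    nlinarith [(by exact_mod_cast (by omega : 1 ≤ T) : (1 : ℝ) ≤ T)]
  have hW : √(2 * (1 + T * V)) ≤ 2 * M :=
    Real.sqrt_le_iff.2 ⟨by positivity, by nlinarith⟩
  have hW' : √(1 + T * V) ≤ √(2 * (1 + T * V)) := Real.sqrt_le_sqrt (by nlinarith)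
  calc (variationPolicy T).expRegret v m
      ≤ 1 + (√(1 + T * V) + V + 2 * √(2 * (1 + T * V))) :=
        expRegret_variationPolicy_le (by omega) hv hm
    _ ≤ 8 * M * (1 + Real.log T) ^ 0 := by rw [pow_zero, mul_one]; linarith
end

section
/- There exist constants C > 0 and k ∈ ℕ such that for every integer T ≥ 2 and all reals V > 0 and Vᵛ ≥ 0 there exists a randomized bidding policy π over T rounds (which may depend on V and Vᵛ, corresponding to restarting the Hedge algorithm every Δ_T = Θ((T/(V + Vᵛ))^{2/3}) rounds) such that for every sequence (v_t, m_t)_{t=1}^T ⊂ [0,1]^2 with Σ_{t=2}^T |m_t − m_{t−1}| ≤ V and Σ_{t=2}^T |v_t − v_{t−1}| ≤ Vᵛ, the expected dynamic regret of π on this sequence is at most C · max{T^{2/3}·(V + Vᵛ)^{1/3}, 1} · (1 + log T)^k. -/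
open Finset

noncomputable def roundRegret (b v m : ℝ) : ℝ := max (v - m) 0 - fpaReward b v m

lemma roundRegret_le_one {b v m : ℝ} (hb : b ≤ 1) (hv : v ∈ Set.Icc (0 : ℝ) 1) (hm : 0 ≤ m) :
    roundRegret b v m ≤ 1 := by
  obtain ⟨hv0, hv1⟩ := hv
  unfold roundRegret fpaReward
  split_ifs <;> cases max_cases (v - m) 0 <;> linarith

lemma roundRegret_min_add_le {v m m' δ : ℝ} (hδ : 0 ≤ δ) (hv : v ≤ 1) (hm : 0 ≤ m) :
    roundRegret (min v (m' + δ)) v m ≤ |m - m'| + δ + if δ < m - m' then 1 else 0 := by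
  have hbv : min v (m' + δ) ≤ v := min_le_left _ _
  have hbm : min v (m' + δ) ≤ m' + δ := min_le_right _ _
  have habs : m' - m ≤ |m - m'| := by rw [abs_sub_comm]; exact le_abs_self _
  have hind : (0 : ℝ) ≤ if δ < m - m' then 1 else 0 := by split_ifs <;> norm_num
  unfold roundRegret fpaReward
  split_ifs with hwin hjump
  · rw [max_eq_left (by linarith)]; linarith [abs_nonneg (m - m')]
  · rw [max_eq_left (by linarith)]; linarith
  · -- a profitable round lost by bidding `m' + δ < m` is a jump of `m` by more than `δ`
    cases max_cases (v - m) 0 <;> linarith [abs_nonneg (m - m')]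
  · have hvm : v ≤ m := by
      by_contra! hvm
      exact hwin (le_min hvm.le (by linarith))
    rw [max_eq_right (by linarith)]; linarith [abs_nonneg (m - m')]

lemma sum_ite_lt_le_sum_abs_div {ι : Type*} (s : Finset ι) (x : ι → ℝ) {δ : ℝ} (hδ : 0 < δ) :
    (∑ i ∈ s, if δ < x i then (1 : ℝ) else 0) ≤ (∑ i ∈ s, |x i|) / δ := by
  rw [sum_div]
  refine sum_le_sum fun i _ => ?_
  split_ifs with h
  · rw [le_div_iff₀ hδ, one_mul]
    exact h.le.trans (le_abs_self _)
  · positivity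

noncomputable def followBid (δ : ℝ) : (t : ℕ) → (Fin t → ℝ × ℝ) → ℝ → ℝ
  | 0, _, _ => 0
  | s + 1, h, v => max 0 (min 1 (min v ((h (Fin.last s)).2 + δ)))

noncomputable def followPolicy (T : ℕ) (δ : ℝ) : BidPolicy T where
  Ω := Unit
  μ := MeasureTheory.Measure.dirac ()
  isProb := inferInstance
  bid t h v _ := followBid δ t h v
  bid_mem t h v _ := by
    cases t with
    | zero => exact ⟨le_rfl, zero_le_one⟩
    | succ s => exact ⟨le_max_left _ _, max_le zero_le_one (min_le_left _ _)⟩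
  bid_measurable t := by
    cases t with
    | zero => exact measurable_const
    | succ s =>
      have hlast : Measurable fun p : (Fin (s + 1) → ℝ × ℝ) × ℝ × Unit =>
          (p.1 (Fin.last s)).2 :=
        ((measurable_pi_apply (Fin.last s)).comp measurable_fst).snd
      exact measurable_const.max (measurable_const.min
        ((measurable_fst.comp measurable_snd).min (hlast.add measurable_const)))

section followPolicy

open Real

variable {T : ℕ} {δ : ℝ} {v m : ℕ → ℝ}

lemma followPolicy_expRegret :
    (followPolicy T δ).expRegret v m =
      ∑ t ∈ range T, roundRegret ((followPolicy T δ).bids v m t ()) (v t) (m t) :=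
  MeasureTheory.integral_dirac _ ()

lemma followPolicy_expRegret_le_horizon (hv : ∀ t < T, v t ∈ Set.Icc (0 : ℝ) 1)
    (hm : ∀ t < T, m t ∈ Set.Icc (0 : ℝ) 1) :
    (followPolicy T δ).expRegret v m ≤ T := by
  rw [followPolicy_expRegret]
  calc _ ≤ ∑ _t ∈ range T, (1 : ℝ) := sum_le_sum fun t ht => by
        rw [mem_range] at ht
        exact roundRegret_le_one ((followPolicy T δ).bid_mem _ _ _ _).2 (hv t ht) (hm t ht).1
    _ = T := by simp

lemma followPolicy_expRegret_le (hδ : 0 < δ) (hv : ∀ t < T, v t ∈ Set.Icc (0 : ℝ) 1)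
    (hm : ∀ t < T, m t ∈ Set.Icc (0 : ℝ) 1) :
    (followPolicy T δ).expRegret v m ≤
      1 + totalVariation m T + T * δ + totalVariation m T / δ := by
  rcases Nat.eq_zero_or_pos T with rfl | hT
  · simp [followPolicy_expRegret, totalVariation]
  set r : ℕ → ℝ := fun t => roundRegret ((followPolicy T δ).bids v m t ()) (v t) (m t)
  have hfirst : r 0 ≤ 1 := roundRegret_le_one zero_le_one (hv 0 hT) (hm 0 hT).1
  have hstep : ∀ i ∈ range (T - 1),
      r (i + 1) ≤ |m (i + 1) - m i| + δ + if δ < m (i + 1) - m i then 1 else 0 := by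
    intro i hi
    have hi1 : i + 1 < T := by rw [mem_range] at hi; omega
    obtain ⟨hv0, hv1⟩ := hv (i + 1) hi1
    have hmi := (hm i (by omega)).1
    have hclamp : max 0 (min 1 (min (v (i + 1)) (m i + δ))) = min (v (i + 1)) (m i + δ) := by
      rw [min_eq_right ((min_le_left _ _).trans hv1),
        max_eq_right (le_min hv0 (by linarith))]
    change roundRegret (max 0 (min 1 (min (v (i + 1)) (m i + δ)))) _ _ ≤ _
    rw [hclamp]
    exact roundRegret_min_add_le hδ.le hv1 (hm (i + 1) hi1).1
  have hjumps := sum_ite_lt_le_sum_abs_div (range (T - 1)) (fun i => m (i + 1) - m i) hδ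
  have hcard : ((T - 1 : ℕ) : ℝ) * δ ≤ T * δ :=
    mul_le_mul_of_nonneg_right (by exact_mod_cast T.sub_le 1) hδ.le
  rw [followPolicy_expRegret, ← Nat.sub_add_cancel hT, sum_range_succ', Nat.sub_add_cancel hT]
  have := sum_le_sum hstep
  simp only [sum_add_distrib, sum_const, card_range, nsmul_eq_mul] at this
  unfold totalVariation
  linarith

lemma followPolicy_expRegret_le_sqrt {V : ℝ} (hT : 0 < T) (hV : 0 < V)
    (hv : ∀ t < T, v t ∈ Set.Icc (0 : ℝ) 1) (hm : ∀ t < T, m t ∈ Set.Icc (0 : ℝ) 1)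
    (hVar : totalVariation m T ≤ V) :
    (followPolicy T (√(V * T) / T)).expRegret v m ≤ 1 + V + 2 * √(V * T) := by
  have hTpos : (0 : ℝ) < T := by exact_mod_cast hT
  have hs : 0 < √(V * T) := sqrt_pos.mpr (by positivity)
  have hδ : 0 < √(V * T) / T := div_pos hs hTpos
  have hTδ : T * (√(V * T) / T) = √(V * T) := by field_simp
  have hVδ : V / (√(V * T) / T) = √(V * T) := by
    rw [div_div_eq_mul_div, div_eq_iff hs.ne', mul_self_sqrt (by positivity), mul_comm]
  have hVδ' : totalVariation m T / (√(V * T) / T) ≤ V / (√(V * T) / T) :=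
    div_le_div_of_nonneg_right hVar hδ.le
  linarith [followPolicy_expRegret_le hδ hv hm]

end followPolicy

section rpow

open Real

lemma self_le_rpow_mul_rpow {T V : ℝ} (hT : 0 ≤ T) (hTV : T ≤ V) :
    T ≤ T ^ ((2 : ℝ) / 3) * V ^ ((1 : ℝ) / 3) :=
  calc T = T ^ ((2 : ℝ) / 3) * T ^ ((1 : ℝ) / 3) := by
        rw [← rpow_add' hT (by norm_num)]; norm_num
    _ ≤ _ := by gcongr

lemma sqrt_mul_le_rpow_mul_rpow {T V : ℝ} (hV : 0 ≤ V) (hVT : V ≤ T) :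
    √(V * T) ≤ T ^ ((2 : ℝ) / 3) * V ^ ((1 : ℝ) / 3) := by
  have hT : 0 ≤ T := hV.trans hVT
  rw [sqrt_le_iff]
  refine ⟨by positivity, ?_⟩
  calc V * T = V ^ ((1 : ℝ) / 3) * V ^ ((2 : ℝ) / 3) * T := by
        rw [← rpow_add' hV (by norm_num)]; norm_num
    _ ≤ T ^ ((1 : ℝ) / 3) * V ^ ((2 : ℝ) / 3) * T := by gcongr
    _ = (T ^ ((2 : ℝ) / 3) * V ^ ((1 : ℝ) / 3)) ^ 2 := by
        rw [mul_pow, ← rpow_natCast, ← rpow_natCast, ← rpow_mul hT, ← rpow_mul hV,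
          mul_right_comm, ← rpow_add_one' hT (by norm_num)]
        norm_num

end rpow

/-- Restarted-Hedge upper bound: for known `V > 0` and `Vᵛ ≥ 0` there is a policy
(restarting Hedge every `Θ((T/(V + Vᵛ))^{2/3})` rounds) whose expected dynamic regret
on every sequence in `[0,1]²` with `Σ |m_t - m_{t-1}| ≤ V` and `Σ |v_t - v_{t-1}| ≤ Vᵛ`
is `O(max {T^{2/3}·(V + Vᵛ)^{1/3}, 1})` up to polylogarithmic factors in `T`. -/
theorem restart_hedge_upper_bound :
    ∃ C : ℝ, 0 < C ∧ ∃ k : ℕ, ∀ T : ℕ, 2 ≤ T → ∀ V : ℝ, 0 < V → ∀ Vv : ℝ, 0 ≤ Vv →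
      ∃ π : BidPolicy T,
        ∀ v m : ℕ → ℝ,
          (∀ t < T, v t ∈ Set.Icc (0:ℝ) 1) → (∀ t < T, m t ∈ Set.Icc (0:ℝ) 1) →
          totalVariation m T ≤ V → totalVariation v T ≤ Vv →
          π.expRegret v m ≤
            C * max ((T : ℝ) ^ ((2:ℝ)/3) * (V + Vv) ^ ((1:ℝ)/3)) 1 *
              (1 + Real.log T) ^ k := by
  refine ⟨4, by norm_num, 0, fun T hT V hV Vv hVv => ?_⟩
  refine ⟨followPolicy T (√(V * T) / T), fun v m hv hm hVar _ => ?_⟩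
  have hTpos : (0 : ℝ) < T := by exact_mod_cast (by omega : 0 < T)
  have hVVv : (T : ℝ) ^ ((2 : ℝ) / 3) * V ^ ((1 : ℝ) / 3) ≤
      (T : ℝ) ^ ((2 : ℝ) / 3) * (V + Vv) ^ ((1 : ℝ) / 3) := by gcongr; linarith
  have hmax := le_max_left ((T : ℝ) ^ ((2 : ℝ) / 3) * (V + Vv) ^ ((1 : ℝ) / 3)) 1
  have hone := le_max_right ((T : ℝ) ^ ((2 : ℝ) / 3) * (V + Vv) ^ ((1 : ℝ) / 3)) 1
  rw [pow_zero, mul_one]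
  rcases le_total V T with hVT | hTV
  · have hVs : V ≤ √(V * T) := by
      calc V = √(V * V) := (Real.sqrt_mul_self hV.le).symm
        _ ≤ √(V * T) := Real.sqrt_le_sqrt (by gcongr)
    linarith [followPolicy_expRegret_le_sqrt (by omega) hV hv hm hVar,
      sqrt_mul_le_rpow_mul_rpow hV.le hVT]
  · linarith [followPolicy_expRegret_le_horizon (δ := √(V * T) / T) hv hm,
      self_le_rpow_mul_rpow hTpos.le hTV]
end
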